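/- arXiv:0704.3821 — 3 statements merged into one kernel-verified Lean document; each statement's English description precedes it below -/
import Mathlib

section
/- For all m, n ≥ 0: 2^{mn} = Σ_P ∏_{B ∈ P} Conn(#(B ∩ X), #(B ∩ Y)), where X and Y are disjoint sets with #X = m and #Y = n (e.g., the two summands of Fin m ⊕ Fin n), the sum is over all partitions P of X ∪ Y into nonempty blocks, and Conn(a,b) denotes the number of connected bipartite graphs on a fixed bipartition with parts of sizes a and b. -/
/-- `connBipartiteCount a b` is the number of connected bipartite graphs on the fixed
bipartition `(Fin a, Fin b)`, i.e. the number of simple graphs on `Fin a ⊕ Fin b` all of whose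
edges join the two summands and which are connected (so `connBipartiteCount 0 0 = 0`). -/
noncomputable def connBipartiteCount (a b : ℕ) : ℕ :=
  Nat.card {G : SimpleGraph (Fin a ⊕ Fin b) //
    (∀ u v : Fin a ⊕ Fin b, G.Adj u v → u.isLeft ≠ v.isLeft) ∧ G.Connected}

/-!
Every bipartite graph on `X ⊔ Y` is a spanning subgraph of the complete bipartite graph `K`,
which has `m * n` edges, so there are `2 ^ (m * n)` of them. Sort them by the partition of the
vertices into connected components: the graphs with component partition `P` correspond to
families choosing, for each block `B` of `P`, a connected spanning subgraph of `K` restricted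
to `B`, and that restriction is the complete bipartite graph on `B ∩ X` and `B ∩ Y`.
-/

open Finset SimpleGraph

namespace Finpartition

variable {α : Type*} [DecidableEq α] {s : Finset α}

theorem ext_part {P Q : Finpartition s} (h : ∀ a ∈ s, P.part a = Q.part a) : P = Q := by
  have parts_sub : ∀ P Q : Finpartition s, (∀ a ∈ s, P.part a = Q.part a) →
      ∀ t ∈ P.parts, t ∈ Q.parts := by
    intro P Q h t ht
    obtain ⟨a, ha⟩ := P.nonempty_of_mem_parts ht
    have has : a ∈ s := P.le ht ha
    rw [← P.part_eq_of_mem ht ha, h a has]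
    exact Q.part_mem.2 has
  ext t
  exact ⟨parts_sub P Q h t, parts_sub Q P (fun a ha => (h a ha).symm) t⟩

end Finpartition

namespace SimpleGraph

variable {V : Type*} [Fintype V] [DecidableEq V]

noncomputable def componentPartition (G : SimpleGraph V) : Finpartition (univ : Finset V) :=
  letI := Classical.decRel G.reachableSetoid.r
  Finpartition.ofSetoid G.reachableSetoid

theorem mem_part_componentPartition {G : SimpleGraph V} {a b : V} :
    b ∈ G.componentPartition.part a ↔ G.Reachable a b := by
  let := Classical.decRel G.reachableSetoid.r
  exact Finpartition.mem_part_ofSetoid_iff_rel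

theorem componentPartition_eq_iff {G : SimpleGraph V} {P : Finpartition (univ : Finset V)} :
    G.componentPartition = P ↔ ∀ a b, G.Reachable a b ↔ b ∈ P.part a := by
  refine ⟨?_, fun h => Finpartition.ext_part fun a _ => ?_⟩
  · rintro rfl a b
    exact mem_part_componentPartition.symm
  · ext b
    rw [mem_part_componentPartition, h]

theorem connected_induce_of_mem_componentPartition {G : SimpleGraph V} {B : Finset V}
    (hB : B ∈ G.componentPartition.parts) : (G.induce (B : Set V)).Connected := by
  obtain ⟨a, ha⟩ := G.componentPartition.nonempty_of_mem_parts hB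
  have hsupp : (B : Set V) = (G.connectedComponentMk a).supp := by
    ext b
    rw [ConnectedComponent.mem_supp_iff, ConnectedComponent.eq, reachable_comm, mem_coe,
      ← mem_part_componentPartition, G.componentPartition.part_eq_of_mem hB ha]
  rw [hsupp]
  exact (G.connectedComponentMk a).maximal_connected_induce_supp.1

end SimpleGraph

namespace Finpartition

variable {V : Type*} [DecidableEq V] {s : Finset V}

def unionGraph (P : Finpartition s) (F : ∀ B : P.parts, SimpleGraph ((B : Finset V) : Set V)) :
    SimpleGraph V where
  Adj u v := ∃ (B : P.parts) (hu : u ∈ (B : Finset V)) (hv : v ∈ (B : Finset V)),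
    (F B).Adj ⟨u, hu⟩ ⟨v, hv⟩
  symm := ⟨fun _ _ ⟨B, hu, hv, h⟩ => ⟨B, hv, hu, h.symm⟩⟩
  loopless := ⟨fun _ ⟨B, _, _, h⟩ => (F B).irrefl h⟩

variable {P : Finpartition s} {F : ∀ B : P.parts, SimpleGraph ((B : Finset V) : Set V)} {u v : V}

@[simp]
theorem unionGraph_adj : (P.unionGraph F).Adj u v ↔
    ∃ (B : P.parts) (hu : u ∈ (B : Finset V)) (hv : v ∈ (B : Finset V)),
      (F B).Adj ⟨u, hu⟩ ⟨v, hv⟩ :=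
  Iff.rfl

@[simp]
theorem induce_unionGraph (B : P.parts) : (P.unionGraph F).induce (B : Finset V) = F B := by
  ext x y
  rw [SimpleGraph.induce_adj, unionGraph_adj]
  refine ⟨fun ⟨B', hx, hy, h⟩ => ?_, fun h => ⟨B, x.2, y.2, h⟩⟩
  obtain rfl : B' = B := Subtype.ext (P.eq_of_mem_parts B'.2 B.2 hx x.2)
  exact h

theorem unionGraph_le {H : SimpleGraph V} (hF : ∀ B, F B ≤ H.induce (B : Finset V)) :
    P.unionGraph F ≤ H := by
  rintro u v h
  obtain ⟨B, _, _, h⟩ := unionGraph_adj.1 h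
  exact hF B h

end Finpartition

namespace SimpleGraph

variable {V W : Type*}

section

variable [Fintype V] [DecidableEq V]

theorem unionGraph_induce_componentPartition (G : SimpleGraph V) :
    G.componentPartition.unionGraph (fun B => G.induce (B : Finset V)) = G := by
  ext u v
  rw [Finpartition.unionGraph_adj]
  refine ⟨fun ⟨_, _, _, h⟩ => h, fun h => ?_⟩
  exact ⟨⟨_, G.componentPartition.part_mem.2 (mem_univ u)⟩,
    G.componentPartition.mem_part (mem_univ u), mem_part_componentPartition.2 h.reachable, h⟩

theorem componentPartition_unionGraph {P : Finpartition (univ : Finset V)}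
    {F : ∀ B : P.parts, SimpleGraph ((B : Finset V) : Set V)} (hF : ∀ B, (F B).Connected) :
    (P.unionGraph F).componentPartition = P := by
  refine componentPartition_eq_iff.2 fun a b => ⟨fun hab => ?_, fun hb => ?_⟩
  · obtain ⟨w⟩ := hab
    induction w with
    | nil => exact P.mem_part (mem_univ _)
    | cons h _ ih =>
      obtain ⟨B, hu, hv, -⟩ := Finpartition.unionGraph_adj.1 h
      rwa [P.part_eq_of_mem B.2 hu, ← P.part_eq_of_mem B.2 hv]
  · let B : P.parts := ⟨P.part a, P.part_mem.2 (mem_univ a)⟩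
    let emb : F B →g P.unionGraph F := ⟨Subtype.val, fun {x y} h =>
      Finpartition.unionGraph_adj.2 ⟨B, x.2, y.2, h⟩⟩
    exact ((hF B).preconnected ⟨a, P.mem_part (mem_univ a)⟩ ⟨b, hb⟩).map emb

noncomputable def componentPartitionFiberEquiv (H : SimpleGraph V)
    (P : Finpartition (univ : Finset V)) :
    {G // G ≤ H ∧ G.componentPartition = P} ≃
      ∀ B : P.parts, {G : SimpleGraph ((B : Finset V) : Set V) //
        G ≤ H.induce (B : Finset V) ∧ G.Connected} where
  toFun G B := ⟨G.1.induce (B : Finset V), comap_monotone _ G.2.1,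
    connected_induce_of_mem_componentPartition (G.2.2.symm ▸ B.2)⟩
  invFun F := ⟨P.unionGraph fun B => (F B).1, Finpartition.unionGraph_le fun B => (F B).2.1,
    componentPartition_unionGraph fun B => (F B).2.2⟩
  left_inv G := by
    obtain ⟨G, -, rfl⟩ := G
    exact Subtype.ext G.unionGraph_induce_componentPartition
  right_inv F := funext fun B => Subtype.ext (Finpartition.induce_unionGraph B)

theorem card_le_eq_sum_finpartition_prod (H : SimpleGraph V) :
    Nat.card {G // G ≤ H} = ∑ P : Finpartition (univ : Finset V), ∏ B ∈ P.parts,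
      Nat.card {G : SimpleGraph (B : Set V) // G ≤ H.induce B ∧ G.Connected} := by
  rw [Nat.card_congr (Equiv.sigmaFiberEquiv fun G : {G // G ≤ H} => G.1.componentPartition).symm,
    Nat.card_sigma]
  refine sum_congr rfl fun P _ => ?_
  rw [Nat.card_congr ((Equiv.subtypeSubtypeEquivSubtypeInter _ _).trans
      (componentPartitionFiberEquiv H P)), Nat.card_pi]
  exact prod_coe_sort P.parts fun B =>
    Nat.card {G : SimpleGraph (B : Set V) // G ≤ H.induce B ∧ G.Connected}

end

def leEquivPowersetEdgeSet (H : SimpleGraph V) : {G // G ≤ H} ≃ 𝒫 H.edgeSet where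
  toFun G := ⟨G.1.edgeSet, Set.mem_powerset (edgeSet_mono G.2)⟩
  invFun s := ⟨fromEdgeSet s, (fromEdgeSet_le H).2 (Set.sdiff_subset.trans s.2)⟩
  left_inv G := Subtype.ext (fromEdgeSet_edgeSet G.1)
  right_inv s := Subtype.ext <| (edgeSet_fromEdgeSet _).trans <| sdiff_eq_left.2 <|
    Set.disjoint_left.2 fun _ he => not_isDiag_of_mem_edgeSet H (s.2 he)

theorem card_le_eq_two_pow_card_edgeSet [Finite V] (H : SimpleGraph V) :
    Nat.card {G // G ≤ H} = 2 ^ Nat.card H.edgeSet := by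
  rw [Nat.card_congr H.leEquivPowersetEdgeSet, Nat.card_coe_set_eq, Set.ncard_powerset,
    Nat.card_coe_set_eq]

theorem Iso.le_iff_simpleGraph_le {H : SimpleGraph V} {H' : SimpleGraph W} (e : H ≃g H')
    {G : SimpleGraph V} : G ≤ H ↔ e.toEquiv.simpleGraph G ≤ H' := by
  refine ⟨fun h u v huv => ?_, fun h u v huv => e.map_adj_iff.1 (h ?_)⟩
  · simpa only [← RelIso.coe_fn_toEquiv, Equiv.apply_symm_apply] using e.map_adj_iff.2 (h huv)
  · simpa only [Equiv.simpleGraph_apply, comap_adj, ← RelIso.coe_fn_toEquiv,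
      Equiv.symm_apply_apply] using huv

theorem Iso.card_connected_le_eq {H : SimpleGraph V} {H' : SimpleGraph W} (e : H ≃g H') :
    Nat.card {G // G ≤ H ∧ G.Connected} = Nat.card {G // G ≤ H' ∧ G.Connected} := by
  exact Nat.card_congr (e.toEquiv.simpleGraph.subtypeEquiv fun G =>
    and_congr e.le_iff_simpleGraph_le (Iso.comap e.toEquiv.symm G).connected_iff.symm)

theorem le_completeBipartiteGraph_iff {α β : Type*} {G : SimpleGraph (α ⊕ β)} :
    G ≤ completeBipartiteGraph α β ↔ ∀ u v, G.Adj u v → u.isLeft ≠ v.isLeft := by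
  refine forall₂_congr fun u v => imp_congr_right fun _ => ?_
  cases u <;> cases v <;> simp

theorem natCard_edgeSet_completeBipartiteGraph (α β : Type*) [Finite α] [Finite β] :
    Nat.card (completeBipartiteGraph α β).edgeSet = Nat.card α * Nat.card β := by
  rw [Nat.card_coe_set_eq, Set.ncard, encard_edgeSet_completeBipartiteGraph,
    ENat.card_eq_coe_natCard, ENat.card_eq_coe_natCard]
  rfl

def induceCompleteBipartiteGraphIso {α β : Type*} (s : Set (α ⊕ β)) :
    (completeBipartiteGraph α β).induce s ≃g
      completeBipartiteGraph (Sum.inl ⁻¹' s) (Sum.inr ⁻¹' s) where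
  toEquiv := Equiv.subtypeSum
  map_rel_iff' := by
    rintro ⟨a | b, ha⟩ ⟨a' | b', ha'⟩ <;> simp [Equiv.subtypeSum]

end SimpleGraph

theorem connBipartiteCount_eq_card (a b : ℕ) :
    connBipartiteCount a b =
      Nat.card {G // G ≤ completeBipartiteGraph (Fin a) (Fin b) ∧ G.Connected} := by
  simp only [connBipartiteCount, le_completeBipartiteGraph_iff]

theorem card_connected_le_completeBipartiteGraph (α β : Type*) [Finite α] [Finite β] :
    Nat.card {G // G ≤ completeBipartiteGraph α β ∧ G.Connected} =
      connBipartiteCount (Nat.card α) (Nat.card β) := by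
  rw [connBipartiteCount_eq_card]
  exact (completeBipartiteGraphCongr (Finite.equivFin α) (Finite.equivFin β)).card_connected_le_eq

theorem Finset.natCard_preimage_inl {α β : Type*} (B : Finset (α ⊕ β)) :
    Nat.card (Sum.inl ⁻¹' (B : Set (α ⊕ β))) = #(B.filter fun v => v.isLeft = true) := by
  have : Sum.inl '' (Sum.inl ⁻¹' (B : Set (α ⊕ β))) =
      ((B.filter fun v => v.isLeft = true : Finset (α ⊕ β)) : Set (α ⊕ β)) := by
    ext (a | b) <;> simp
  rw [← Nat.card_image_of_injective Sum.inl_injective, this, Nat.card_coe_set_eq,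
    Set.ncard_coe_finset]

theorem Finset.natCard_preimage_inr {α β : Type*} (B : Finset (α ⊕ β)) :
    Nat.card (Sum.inr ⁻¹' (B : Set (α ⊕ β))) = #(B.filter fun v => v.isRight = true) := by
  have : Sum.inr '' (Sum.inr ⁻¹' (B : Set (α ⊕ β))) =
      ((B.filter fun v => v.isRight = true : Finset (α ⊕ β)) : Set (α ⊕ β)) := by
    ext (a | b) <;> simp
  rw [← Nat.card_image_of_injective Sum.inr_injective, this, Nat.card_coe_set_eq,
    Set.ncard_coe_finset]

theorem card_connected_le_induce_completeBipartiteGraph {α β : Type*} (B : Finset (α ⊕ β)) :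
    Nat.card {G : SimpleGraph (B : Set (α ⊕ β)) //
        G ≤ (completeBipartiteGraph α β).induce B ∧ G.Connected} =
      connBipartiteCount #(B.filter fun v => v.isLeft = true)
        #(B.filter fun v => v.isRight = true) := by
  have := (B.finite_toSet.preimage Sum.inl_injective.injOn).to_subtype
  have := (B.finite_toSet.preimage Sum.inr_injective.injOn).to_subtype
  rw [(induceCompleteBipartiteGraphIso (B : Set (α ⊕ β))).card_connected_le_eq,
    card_connected_le_completeBipartiteGraph, B.natCard_preimage_inl, B.natCard_preimage_inr]

/-- **Counting bipartite graphs by connected components.**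
For all `m, n ≥ 0`, `2^{mn} = ∑_P ∏_{B ∈ P} Conn(#(B ∩ X), #(B ∩ Y))`, where the sum is
over all partitions `P` of `X ∪ Y` (with `X, Y` the two summands of `Fin m ⊕ Fin n`)
into nonempty blocks. -/
theorem two_pow_eq_sum_partitions_prod_conn (m n : ℕ) :
    2 ^ (m * n) =
      ∑ P : Finpartition (Finset.univ : Finset (Fin m ⊕ Fin n)),
        ∏ B ∈ P.parts,
          connBipartiteCount (B.filter (fun v => v.isLeft = true)).card
            (B.filter (fun v => v.isRight = true)).card := by
  calc 2 ^ (m * n) = Nat.card {G // G ≤ completeBipartiteGraph (Fin m) (Fin n)} := by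
        rw [card_le_eq_two_pow_card_edgeSet, natCard_edgeSet_completeBipartiteGraph,
          Nat.card_fin, Nat.card_fin]
    _ = _ := card_le_eq_sum_finpartition_prod _
    _ = _ := sum_congr rfl fun P _ => prod_congr rfl fun B _ =>
        card_connected_le_induce_completeBipartiteGraph B
end

section
/- For all m, n ≥ 0, the number of compositions of the complete bipartite graph satisfies C(K_{m,n}) = Σ_{i=1}^{m+1} a_{m,i} · i^n, where a_{m,i} = Σ_{k=1}^{m+1} (−1)^{k−i} · C(k−1, i−1) · S(m+1, k), with C(·,·) binomial coefficients and S(·,·) Stirling numbers of the second kind. -/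
/-- `compCount G` is the number of compositions of the finite simple graph `G`, i.e. the
number of partitions of its vertex set into nonempty blocks each of which induces a
connected subgraph of `G`. -/
noncomputable def compCount {V : Type*} [Fintype V] [DecidableEq V] (G : SimpleGraph V) : ℕ :=
  Nat.card {P : Finpartition (Finset.univ : Finset V) //
    ∀ B ∈ P.parts, (G.induce (↑B : Set V)).Connected}

/-- `stirling n k` is the Stirling number of the second kind `S(n,k)`: the number of
partitions of an `n`-element set into exactly `k` nonempty blocks. -/
noncomputable def stirling (n k : ℕ) : ℕ :=
  Nat.card {P : Finpartition (Finset.univ : Finset (Fin n)) // P.parts.card = k}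

/-
A connected block of `K_{m,n}` is either a singleton or meets both sides. Adjoin an extra left
vertex `∗` (here `Fin.last m`). A composition `P` then amounts to a set partition `Q` of the
`m + 1` left vertices, whose blocks are the left halves of the mixed blocks of `P` plus one block
made of `∗` and the left singletons, together with a map from the right vertices to the blocks
of `Q` (right singletons go to the block of `∗`) that hits every block not containing `∗`.
If `Q` has `k` blocks, inclusion–exclusion counts these maps as
`∑ i, (-1)^(k-i) C(k-1, i-1) iⁿ`, and there are `S(m+1, k)` such `Q`.
-/

open Finset Sum

def IsMixed {α β : Type*} (B : Finset (α ⊕ β)) : Prop :=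
  (∃ x, inl x ∈ B) ∧ ∃ y, inr y ∈ B

instance {α β : Type*} [Fintype α] [Fintype β] [DecidableEq α] [DecidableEq β] :
    DecidablePred (IsMixed (α := α) (β := β)) :=
  fun _ => inferInstanceAs (Decidable (_ ∧ _))

namespace SimpleGraph

variable {α β : Type*}

theorem completeBipartiteGraph_induce_connected_iff {s : Set (α ⊕ β)} (hs : s.Nonempty) :
    ((completeBipartiteGraph α β).induce s).Connected ↔
      s.Subsingleton ∨ (∃ x, inl x ∈ s) ∧ ∃ y, inr y ∈ s := by
  constructor
  · intro hconn
    refine or_iff_not_imp_left.2 fun hsub => ?_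
    obtain ⟨a, ha, b, hb, hab⟩ := Set.not_subsingleton_iff.1 hsub
    obtain ⟨p⟩ := hconn.preconnected ⟨a, ha⟩ ⟨b, hb⟩
    cases p with
    | nil => exact absurd rfl hab
    | @cons _ c _ hadj _ =>
      obtain ⟨c, hc⟩ := c
      rcases a with x | y <;> rcases c with x' | y'
      · exact absurd hadj (by simp)
      · exact ⟨⟨x, ha⟩, y', hc⟩
      · exact ⟨⟨x', hc⟩, y, ha⟩
      · exact absurd hadj (by simp)
  · rintro (hsub | ⟨⟨x, hx⟩, ⟨y, hy⟩⟩)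
    · have : Subsingleton s := hsub.coe_sort
      exact { preconnected := .of_subsingleton, nonempty := hs.to_subtype }
    · set H := (completeBipartiteGraph α β).induce s
      have hxy : H.Adj ⟨inl x, hx⟩ ⟨inr y, hy⟩ := by simp [H]
      have reach_y (a : s) : H.Reachable a ⟨inr y, hy⟩ := by
        obtain ⟨x' | y', h⟩ := a
        · exact Adj.reachable (by simp [H])
        · exact (Adj.reachable (by simp [H]) : H.Reachable _ ⟨inl x, hx⟩).trans hxy.reachable
      exact (connected_iff_exists_forall_reachable H).2 ⟨_, fun a => (reach_y a).symm⟩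

end SimpleGraph

instance Setoid.decidableRelKer {α β : Type*} [DecidableEq β] (g : α → β) :
    DecidableRel (Setoid.ker g).r :=
  fun a b => decEq (g a) (g b)

namespace Finpartition

variable {α β : Type*} [Fintype α] [DecidableEq α] [DecidableEq β]

theorem part_ofSetoid_ker (g : α → β) (a : α) :
    (ofSetoid (Setoid.ker g)).part a = ({b | g b = g a} : Finset α) := by
  ext b
  rw [mem_part_ofSetoid_iff_rel, mem_filter, Setoid.ker_def]
  simp [eq_comm]

theorem mem_parts_iff_exists_part_eq {P : Finpartition (univ : Finset α)} {C : Finset α} :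
    C ∈ P.parts ↔ ∃ a, P.part a = C :=
  ⟨fun hC => (P.part_surjOn hC).imp fun _ h => h.2,
    fun ⟨a, ha⟩ => ha ▸ P.part_mem.2 (mem_univ a)⟩

theorem ofSetoid_ker_eq {P : Finpartition (univ : Finset α)} {g : α → β}
    (h : ∀ a b, g a = g b ↔ P.part a = P.part b) : ofSetoid (Setoid.ker g) = P := by
  have hpart (a : α) : (ofSetoid (Setoid.ker g)).part a = P.part a := by
    ext b
    rw [part_ofSetoid_ker, mem_filter, h, P.mem_part_iff_part_eq_part (mem_univ b) (mem_univ a)]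
    simp
  ext C
  simp only [mem_parts_iff_exists_part_eq, hpart]

end Finpartition

def SimpleGraph.IsComposition {V : Type*} [Fintype V] [DecidableEq V] (G : SimpleGraph V)
    (P : Finpartition (univ : Finset V)) : Prop :=
  ∀ B ∈ P.parts, (G.induce (B : Set V)).Connected

theorem SimpleGraph.isComposition_completeBipartiteGraph_iff {α β : Type*}
    [Fintype α] [Fintype β] [DecidableEq α] [DecidableEq β]
    {P : Finpartition (univ : Finset (α ⊕ β))} :
    (completeBipartiteGraph α β).IsComposition P ↔
      ∀ u, (P.part u : Set (α ⊕ β)).Subsingleton ∨ IsMixed (P.part u) := by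
  simp only [IsComposition, Finpartition.mem_parts_iff_exists_part_eq, forall_exists_index,
    forall_apply_eq_imp_iff]
  refine forall_congr' fun u => ?_
  rw [completeBipartiteGraph_induce_connected_iff (by simp)]
  simp [IsMixed]

theorem sum_finpartition_eq_sum_stirling {M : Type*} [AddCommMonoid M] (N : ℕ) (F : ℕ → M) :
    ∑ Q : Finpartition (univ : Finset (Fin (N + 1))), F #Q.parts =
      ∑ k ∈ Icc 1 (N + 1), stirling (N + 1) k • F k := by
  have hcard (Q : Finpartition (univ : Finset (Fin (N + 1)))) : #Q.parts ∈ Icc 1 (N + 1) := by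
    refine mem_Icc.2 ⟨card_pos.2 (Q.parts_nonempty (univ_nonempty.ne_empty)), ?_⟩
    simpa using Q.card_parts_le_card
  rw [← sum_fiberwise_of_maps_to (fun Q _ => hcard Q)]
  refine sum_congr rfl fun k _ => ?_
  rw [sum_congr rfl fun Q hQ => by rw [(mem_filter.1 hQ).2], sum_const, stirling,
    Nat.card_eq_fintype_card, Fintype.card_subtype]

theorem card_filter_piFinset_forall_exists_eq {α γ : Type*} [Fintype α] [DecidableEq α]
    [Fintype γ] [DecidableEq γ] (s t : Finset γ) :
    (#{f ∈ Fintype.piFinset fun _ : α => s | ∀ c ∈ t, ∃ a, f a = c} : ℤ) =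
      ∑ u ∈ t.powerset, (-1) ^ #u * (#(s \ u) : ℤ) ^ Fintype.card α := by
  let miss (c : γ) : Finset (α → γ) := {f | ∀ a, f a ≠ c}
  have hhit : {f ∈ Fintype.piFinset fun _ : α => s | ∀ c ∈ t, ∃ a, f a = c} =
      {f ∈ t.inf fun c => (miss c)ᶜ | f ∈ Fintype.piFinset fun _ => s} := by
    ext f
    simp [miss, mem_inf, and_comm]
  have hmiss (u : Finset γ) : {f ∈ u.inf miss | f ∈ Fintype.piFinset fun _ => s} =
      Fintype.piFinset fun _ : α => s \ u := by
    ext f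
    simp only [miss, mem_filter, mem_inf, mem_univ, true_and, Fintype.mem_piFinset, mem_sdiff]
    exact ⟨fun h a => ⟨h.2 a, fun hu => h.1 _ hu a rfl⟩,
      fun h => ⟨fun c hc a hac => (h a).2 (hac ▸ hc), fun a => (h a).1⟩⟩
  rw [hhit, ← sum_boole, inclusion_exclusion_sum_inf_compl]
  refine sum_congr rfl fun u _ => ?_
  rw [sum_boole, hmiss, Fintype.card_piFinset, prod_const, card_univ, Nat.cast_pow, smul_eq_mul]

theorem sum_range_choose_mul_pow_eq_sum_Icc {k N : ℕ} (n : ℕ) (hk : 1 ≤ k) (hkN : k ≤ N) :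
    ∑ j ∈ range k, (k - 1).choose j • ((-1 : ℤ) ^ j * ((k - j : ℕ) : ℤ) ^ n) =
      ∑ i ∈ Icc 1 N, (-1 : ℤ) ^ (k - i) * ((k - 1).choose (i - 1) : ℤ) * (i : ℤ) ^ n := by
  have hvanish : ∀ i ∈ Icc 1 N, i ∉ Icc 1 k →
      (-1 : ℤ) ^ (k - i) * ((k - 1).choose (i - 1) : ℤ) * (i : ℤ) ^ n = 0 := by
    intro i hi hik
    simp only [mem_Icc] at hi hik
    rw [Nat.choose_eq_zero_of_lt (by omega), Nat.cast_zero, mul_zero, zero_mul]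
  rw [← sum_subset (Icc_subset_Icc_right hkN) hvanish]
  refine sum_nbij' (fun j => k - j) (fun i => k - i) ?_ ?_ ?_ ?_ ?_
  · intro j hj; simp only [mem_range, mem_Icc] at hj ⊢; omega
  · intro i hi; simp only [mem_range, mem_Icc] at hi ⊢; omega
  · intro j hj; simp only [mem_range] at hj; omega
  · intro i hi; simp only [mem_Icc] at hi; omega
  · intro j hj
    simp only [mem_range] at hj
    rw [nsmul_eq_mul, show k - (k - j) = j by omega, show k - j - 1 = k - 1 - j by omega,
      Nat.choose_symm (by omega)]
    ring

theorem card_filter_piFinset_forall_exists_erase_eq {α γ : Type*} [Fintype α] [DecidableEq α]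
    [Fintype γ] [DecidableEq γ] {s : Finset γ} {c₀ : γ} {N : ℕ} (hc₀ : c₀ ∈ s)
    (hsN : #s ≤ N) :
    (#{f ∈ Fintype.piFinset fun _ : α => s | ∀ c ∈ s.erase c₀, ∃ a, f a = c} : ℤ) =
      ∑ i ∈ Icc 1 N,
        (-1 : ℤ) ^ (#s - i) * ((#s - 1).choose (i - 1) : ℤ) * (i : ℤ) ^ Fintype.card α := by
  have hs : 1 ≤ #s := card_pos.2 ⟨c₀, hc₀⟩
  rw [card_filter_piFinset_forall_exists_eq,
    sum_congr rfl fun u hu => by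
      rw [card_sdiff_of_subset ((mem_powerset.1 hu).trans (erase_subset c₀ s))],
    sum_powerset_apply_card (fun j => (-1 : ℤ) ^ j * ((#s - j : ℕ) : ℤ) ^ Fintype.card α),
    card_erase_of_mem hc₀, Nat.sub_add_cancel hs]
  exact sum_range_choose_mul_pow_eq_sum_Icc _ hs hsN

namespace CompleteBipartiteComposition

section Forward

variable {α β : Type*} [Fintype α] [Fintype β] [DecidableEq α] [DecidableEq β]

def mixedPart (P : Finpartition (univ : Finset (α ⊕ β))) (u : α ⊕ β) :
    Option (Finset (α ⊕ β)) :=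
  if IsMixed (P.part u) then some (P.part u) else none

theorem mixedPart_eq_of_part_eq {P : Finpartition (univ : Finset (α ⊕ β))} {a b : α ⊕ β}
    (h : P.part a = P.part b) : mixedPart P a = mixedPart P b := by
  simp only [mixedPart, h]

variable {m : ℕ}

def leftLabel (P : Finpartition (univ : Finset (Fin m ⊕ β))) :
    Fin (m + 1) → Option (Finset (Fin m ⊕ β)) :=
  Fin.lastCases none fun x => mixedPart P (inl x)

def leftPartition (P : Finpartition (univ : Finset (Fin m ⊕ β))) :
    Finpartition (univ : Finset (Fin (m + 1))) :=
  .ofSetoid (Setoid.ker (leftLabel P))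

def rightMap (P : Finpartition (univ : Finset (Fin m ⊕ β))) (v : β) : Finset (Fin (m + 1)) :=
  {w | leftLabel P w = mixedPart P (inr v)}

end Forward

section Backward

variable {m : ℕ} {β : Type*}

def attachedPart (Q : Finpartition (univ : Finset (Fin (m + 1))))
    (f : β → Finset (Fin (m + 1))) : Fin m ⊕ β → Finset (Fin (m + 1)) :=
  Sum.elim (fun x => Q.part x.castSucc) f

/-- Vertices attached to the block of `Fin.last m` become singletons; the others are grouped by
the block they are attached to. -/
def blockKey (Q : Finpartition (univ : Finset (Fin (m + 1)))) (f : β → Finset (Fin (m + 1)))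
    (u : Fin m ⊕ β) : Finset (Fin (m + 1)) ⊕ (Fin m ⊕ β) :=
  if Fin.last m ∈ attachedPart Q f u then inr u else inl (attachedPart Q f u)

@[simp] theorem attachedPart_inl (Q : Finpartition (univ : Finset (Fin (m + 1))))
    (f : β → Finset (Fin (m + 1))) (x : Fin m) : attachedPart Q f (inl x) = Q.part x.castSucc :=
  rfl

@[simp] theorem attachedPart_inr (Q : Finpartition (univ : Finset (Fin (m + 1))))
    (f : β → Finset (Fin (m + 1))) (v : β) : attachedPart Q f (inr v) = f v :=
  rfl

def ofLeftPartition [Fintype β] [DecidableEq β] (Q : Finpartition (univ : Finset (Fin (m + 1))))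
    (f : β → Finset (Fin (m + 1))) : Finpartition (univ : Finset (Fin m ⊕ β)) :=
  .ofSetoid (Setoid.ker (blockKey Q f))

def IsAdmissible (Q : Finpartition (univ : Finset (Fin (m + 1))))
    (f : β → Finset (Fin (m + 1))) : Prop :=
  (∀ v, f v ∈ Q.parts) ∧ ∀ C ∈ Q.parts.erase (Q.part (Fin.last m)), ∃ v, f v = C

end Backward

open Finpartition

section LeftInverse

variable {m : ℕ} {β : Type*} [Fintype β] [DecidableEq β]
  (P : Finpartition (univ : Finset (Fin m ⊕ β)))

@[simp] theorem leftLabel_last : leftLabel P (Fin.last m) = none := Fin.lastCases_last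

@[simp] theorem leftLabel_castSucc (x : Fin m) : leftLabel P x.castSucc = mixedPart P (inl x) :=
  Fin.lastCases_castSucc _

theorem exists_leftLabel_eq_mixedPart (u : Fin m ⊕ β) : ∃ w, leftLabel P w = mixedPart P u := by
  by_cases hu : IsMixed (P.part u)
  · obtain ⟨x, hx⟩ := hu.1
    refine ⟨x.castSucc, ?_⟩
    rw [leftLabel_castSucc]
    exact mixedPart_eq_of_part_eq (P.part_eq_of_mem (P.part_mem.2 (mem_univ u)) hx)
  · exact ⟨Fin.last m, by rw [leftLabel_last, mixedPart, if_neg hu]⟩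

theorem leftPartition_part (w : Fin (m + 1)) :
    (leftPartition P).part w = ({w' | leftLabel P w' = leftLabel P w} : Finset _) :=
  part_ofSetoid_ker _ _

theorem attachedPart_leftPartition (u : Fin m ⊕ β) :
    attachedPart (leftPartition P) (rightMap P) u =
      ({w | leftLabel P w = mixedPart P u} : Finset _) := by
  rcases u with x | v
  · rw [attachedPart_inl, leftPartition_part, leftLabel_castSucc]
  · rfl

theorem isAdmissible_leftPartition : IsAdmissible (leftPartition P) (rightMap P) := by
  constructor
  · intro v
    obtain ⟨w, hw⟩ := exists_leftLabel_eq_mixedPart P (inr v)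
    exact mem_parts_iff_exists_part_eq.2 ⟨w, by rw [leftPartition_part, hw]; rfl⟩
  · intro C hC
    obtain ⟨hCne, hC⟩ := mem_erase.1 hC
    obtain ⟨w, rfl⟩ := mem_parts_iff_exists_part_eq.1 hC
    have hw : leftLabel P w ≠ none := fun h =>
      hCne (by rw [leftPartition_part, leftPartition_part, h, leftLabel_last])
    induction w using Fin.lastCases with
    | last => exact absurd (leftLabel_last P) hw
    | cast x =>
      have hmix : IsMixed (P.part (inl x)) := by
        by_contra h
        exact hw (by rw [leftLabel_castSucc, mixedPart, if_neg h])
      obtain ⟨y, hy⟩ := hmix.2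
      refine ⟨y, ?_⟩
      rw [rightMap, leftPartition_part, leftLabel_castSucc,
        mixedPart_eq_of_part_eq (P.part_eq_of_mem (P.part_mem.2 (mem_univ _)) hy)]

theorem blockKey_leftPartition (u : Fin m ⊕ β) :
    blockKey (leftPartition P) (rightMap P) u =
      if mixedPart P u = none then inr u
      else inl ({w | leftLabel P w = mixedPart P u} : Finset _) := by
  simp only [blockKey, attachedPart_leftPartition, mem_filter, mem_univ, true_and, leftLabel_last,
    eq_comm (a := none)]

theorem part_eq_of_mixedPart_eq {a b : Fin m ⊕ β} (h : mixedPart P a = mixedPart P b)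
    (hb : mixedPart P b ≠ none) : P.part a = P.part b := by
  unfold mixedPart at h hb
  split_ifs at h hb
  exacts [Option.some_inj.1 h, absurd rfl hb]

theorem eq_of_part_eq_of_mixedPart_eq_none
    (hP : (completeBipartiteGraph (Fin m) β).IsComposition P) {b u : Fin m ⊕ β}
    (hu : mixedPart P u = none) (h : P.part b = P.part u) : b = u := by
  have hmix : ¬IsMixed (P.part u) := fun hmix => by simp [mixedPart, hmix] at hu
  refine ((SimpleGraph.isComposition_completeBipartiteGraph_iff.1 hP u).resolve_right hmix)
    ?_ (P.mem_part (mem_univ u))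
  simp [← h]

theorem ofLeftPartition_leftPartition (hP : (completeBipartiteGraph (Fin m) β).IsComposition P) :
    ofLeftPartition (leftPartition P) (rightMap P) = P := by
  refine ofSetoid_ker_eq fun b u => ?_
  simp only [blockKey_leftPartition]
  split_ifs with hb hu hu
  · exact inr_injective.eq_iff.trans ⟨congrArg P.part, eq_of_part_eq_of_mixedPart_eq_none P hP hu⟩
  · simpa using fun h : P.part b = P.part u => hu (mixedPart_eq_of_part_eq h ▸ hb)
  · simpa using fun h : P.part b = P.part u => hb (mixedPart_eq_of_part_eq h.symm ▸ hu)
  · rw [inl_injective.eq_iff]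
    refine ⟨fun h => part_eq_of_mixedPart_eq P ?_ hu, fun h => by rw [mixedPart_eq_of_part_eq h]⟩
    obtain ⟨w, hw⟩ := exists_leftLabel_eq_mixedPart P b
    simpa [hw] using Finset.ext_iff.1 h w

end LeftInverse

section RightInverse

variable {m : ℕ} {β : Type*}

def partLabel [Fintype β] [DecidableEq β] (Q : Finpartition (univ : Finset (Fin (m + 1))))
    (f : β → Finset (Fin (m + 1))) (C : Finset (Fin (m + 1))) : Option (Finset (Fin m ⊕ β)) :=
  if Fin.last m ∈ C then none else some ({b | blockKey Q f b = inl C} : Finset _)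

variable {Q : Finpartition (univ : Finset (Fin (m + 1)))} {f : β → Finset (Fin (m + 1))}

theorem blockKey_eq_inl_iff {C : Finset (Fin (m + 1))} (hC : Fin.last m ∉ C) {b : Fin m ⊕ β} :
    blockKey Q f b = inl C ↔ attachedPart Q f b = C := by
  unfold blockKey
  split_ifs with hb
  · simp only [false_iff]
    rintro rfl
    exact hC hb
  · exact inl_injective.eq_iff

theorem exists_attachedPart_inl_eq {C : Finset (Fin (m + 1))} (hC : C ∈ Q.parts)
    (hl : Fin.last m ∉ C) : ∃ x, attachedPart Q f (inl x) = C := by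
  obtain ⟨w, hw⟩ := Q.nonempty_of_mem_parts hC
  obtain ⟨x, rfl⟩ := Fin.exists_castSucc_eq.2 (ne_of_mem_of_not_mem hw hl)
  exact ⟨x, Q.part_eq_of_mem hC hw⟩

theorem attachedPart_mem_parts (hf : IsAdmissible Q f) (u : Fin m ⊕ β) :
    attachedPart Q f u ∈ Q.parts := by
  rcases u with x | v
  exacts [Q.part_mem.2 (mem_univ _), hf.1 v]

variable [Fintype β] [DecidableEq β]

theorem ofLeftPartition_part (u : Fin m ⊕ β) :
    (ofLeftPartition Q f).part u = ({b | blockKey Q f b = blockKey Q f u} : Finset _) :=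
  part_ofSetoid_ker _ _

theorem ofLeftPartition_part_of_last_mem {u : Fin m ⊕ β}
    (hl : Fin.last m ∈ attachedPart Q f u) : (ofLeftPartition Q f).part u = {u} := by
  have hu : blockKey Q f u = inr u := if_pos hl
  ext b
  rw [ofLeftPartition_part, mem_filter, hu, mem_singleton, and_iff_right (mem_univ b)]
  unfold blockKey
  split_ifs with hb
  · exact inr_injective.eq_iff
  · simp only [false_iff]
    rintro rfl
    exact hb hl

theorem isMixed_ofLeftPartition_part (hf : IsAdmissible Q f) {u : Fin m ⊕ β}
    (hl : Fin.last m ∉ attachedPart Q f u) : IsMixed ((ofLeftPartition Q f).part u) := by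
  have hC := attachedPart_mem_parts hf u
  obtain ⟨x, hx⟩ := exists_attachedPart_inl_eq hC hl
  have hne : attachedPart Q f u ≠ Q.part (Fin.last m) := fun h =>
    hl (h ▸ Q.mem_part (mem_univ _))
  obtain ⟨v, hv⟩ := hf.2 _ (mem_erase.2 ⟨hne, hC⟩)
  have hu : blockKey Q f u = inl (attachedPart Q f u) := if_neg hl
  simp only [IsMixed, ofLeftPartition_part, mem_filter, mem_univ, true_and, hu,
    blockKey_eq_inl_iff hl]
  exact ⟨⟨x, hx⟩, v, hv⟩

theorem mixedPart_ofLeftPartition (hf : IsAdmissible Q f) (u : Fin m ⊕ β) :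
    mixedPart (ofLeftPartition Q f) u = partLabel Q f (attachedPart Q f u) := by
  by_cases hl : Fin.last m ∈ attachedPart Q f u
  · rw [mixedPart, ofLeftPartition_part_of_last_mem hl, partLabel, if_pos hl, if_neg]
    rintro ⟨⟨x, hx⟩, y, hy⟩
    rw [mem_singleton] at hx hy
    exact inl_ne_inr (hx.trans hy.symm)
  · rw [mixedPart, if_pos (isMixed_ofLeftPartition_part hf hl), partLabel, if_neg hl,
      ofLeftPartition_part, blockKey, if_neg hl]

theorem leftLabel_ofLeftPartition (hf : IsAdmissible Q f) (w : Fin (m + 1)) :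
    leftLabel (ofLeftPartition Q f) w = partLabel Q f (Q.part w) := by
  induction w using Fin.lastCases with
  | last => rw [leftLabel_last, partLabel, if_pos (Q.mem_part (mem_univ _))]
  | cast x => rw [leftLabel_castSucc, mixedPart_ofLeftPartition hf]; rfl

theorem partLabel_injOn : Set.InjOn (partLabel Q f) Q.parts := by
  intro C hC C' hC' h
  by_cases hl : Fin.last m ∈ C
  · have hl' : Fin.last m ∈ C' := by
      by_contra hl'
      simp [partLabel, hl, hl'] at h
    exact Q.eq_of_mem_parts hC hC' hl hl'
  · have hl' : Fin.last m ∉ C' := fun hl' => by simp [partLabel, hl, hl'] at h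
    simp only [partLabel, if_neg hl, if_neg hl', Option.some_inj] at h
    obtain ⟨x, hx⟩ := exists_attachedPart_inl_eq (f := f) hC hl
    have hxC : inl x ∈ ({b | blockKey Q f b = inl C} : Finset _) := by
      simp [blockKey_eq_inl_iff hl, hx]
    rw [h, mem_filter, blockKey_eq_inl_iff hl', hx] at hxC
    exact hxC.2

theorem leftPartition_ofLeftPartition (hf : IsAdmissible Q f) :
    leftPartition (ofLeftPartition Q f) = Q :=
  ofSetoid_ker_eq fun w w' => by
    rw [leftLabel_ofLeftPartition hf, leftLabel_ofLeftPartition hf]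
    exact partLabel_injOn.eq_iff (Q.part_mem.2 (mem_univ w)) (Q.part_mem.2 (mem_univ w'))

theorem rightMap_ofLeftPartition (hf : IsAdmissible Q f) : rightMap (ofLeftPartition Q f) = f := by
  funext v
  ext w
  rw [rightMap, mem_filter, leftLabel_ofLeftPartition hf, mixedPart_ofLeftPartition hf,
    attachedPart_inr, partLabel_injOn.eq_iff (Q.part_mem.2 (mem_univ w)) (hf.1 v)]
  rw [and_iff_right (mem_univ w)]
  exact Q.part_eq_iff_mem (hf.1 v)

theorem isComposition_ofLeftPartition (hf : IsAdmissible Q f) :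
    (completeBipartiteGraph (Fin m) β).IsComposition (ofLeftPartition Q f) := by
  refine SimpleGraph.isComposition_completeBipartiteGraph_iff.2 fun u => ?_
  by_cases hl : Fin.last m ∈ attachedPart Q f u
  · left
    rw [ofLeftPartition_part_of_last_mem hl, coe_singleton]
    exact Set.subsingleton_singleton
  · exact .inr (isMixed_ofLeftPartition_part hf hl)

end RightInverse

section Count

variable (m : ℕ) (β : Type*) [Fintype β] [DecidableEq β]

def compositionEquiv :
    {P : Finpartition (univ : Finset (Fin m ⊕ β)) //
      (completeBipartiteGraph (Fin m) β).IsComposition P} ≃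
      Σ Q : Finpartition (univ : Finset (Fin (m + 1))),
        {f : β → Finset (Fin (m + 1)) // IsAdmissible Q f} where
  toFun P := ⟨leftPartition P.1, rightMap P.1, isAdmissible_leftPartition P.1⟩
  invFun Qf := ⟨ofLeftPartition Qf.1 Qf.2.1, isComposition_ofLeftPartition Qf.2.2⟩
  left_inv P := Subtype.ext (ofLeftPartition_leftPartition P.1 P.2)
  right_inv := by
    rintro ⟨Q, f, hf⟩
    refine Sigma.ext (leftPartition_ofLeftPartition hf) ?_
    refine (Subtype.heq_iff_coe_eq fun g => ?_).2 (rightMap_ofLeftPartition hf)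
    change IsAdmissible (leftPartition (ofLeftPartition Q f)) g ↔ IsAdmissible Q g
    rw [leftPartition_ofLeftPartition hf]

variable {m β}

theorem card_isAdmissible (Q : Finpartition (univ : Finset (Fin (m + 1)))) :
    (Nat.card {f : β → Finset (Fin (m + 1)) // IsAdmissible Q f} : ℤ) =
      ∑ i ∈ Icc 1 (m + 1), (-1 : ℤ) ^ (#Q.parts - i) * ((#Q.parts - 1).choose (i - 1) : ℤ) *
        (i : ℤ) ^ Fintype.card β := by
  classical
  rw [Nat.card_eq_fintype_card, Fintype.card_subtype,
    ← card_filter_piFinset_forall_exists_erase_eq (Q.part_mem.2 (mem_univ (Fin.last m)))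
      (by simpa using Q.card_parts_le_card)]
  congr 2
  ext f
  simp [IsAdmissible]

end Count

end CompleteBipartiteComposition

/-- **Knopfmacher–Mays formula with explicit coefficients.**
`C(K_{m,n}) = ∑_{i=1}^{m+1} a_{m,i} · iⁿ` where
`a_{m,i} = ∑_{k=1}^{m+1} (−1)^{k−i} · C(k−1, i−1) · S(m+1, k)`. -/
theorem compCount_completeBipartiteGraph_eq_sum_stirling (m n : ℕ) :
    (compCount (completeBipartiteGraph (Fin m) (Fin n)) : ℤ) =
      ∑ i ∈ Finset.Icc 1 (m + 1),
        (∑ k ∈ Finset.Icc 1 (m + 1),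
          (-1 : ℤ) ^ (k - i) * ((k - 1).choose (i - 1) : ℤ) * (stirling (m + 1) k : ℤ)) *
          (i : ℤ) ^ n := by
  have hcount : (compCount (completeBipartiteGraph (Fin m) (Fin n)) : ℤ) =
      ∑ Q : Finpartition (univ : Finset (Fin (m + 1))),
        (Nat.card {f : Fin n → Finset (Fin (m + 1)) //
          CompleteBipartiteComposition.IsAdmissible Q f} : ℤ) := by
    rw [compCount, ← Nat.cast_sum, ← Nat.card_sigma]
    exact congrArg _ (Nat.card_congr (CompleteBipartiteComposition.compositionEquiv m (Fin n)))
  simp only [hcount, CompleteBipartiteComposition.card_isAdmissible, Fintype.card_fin]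
  rw [sum_finpartition_eq_sum_stirling m fun k =>
    ∑ i ∈ Icc 1 (m + 1), (-1 : ℤ) ^ (k - i) * ((k - 1).choose (i - 1) : ℤ) * (i : ℤ) ^ n]
  simp only [nsmul_eq_mul, mul_sum, sum_mul]
  rw [sum_comm]
  exact sum_congr rfl fun i _ => sum_congr rfl fun k _ => by ring
end

section
/- For every n ≥ 1, the following identity of formal power series in one variable x over ℚ holds: ((e^x − 1)^{n−1}/(n−1)!) · e^x · e^{−(e^x − 1)} = Σ_{m≥0} a_{m,n} x^m/m!, where a_{m,n} = Σ_{k=1}^{m+1} (−1)^{k−n} · C(k−1, n−1) · S(m+1, k) for n ≤ m+1 and a_{m,n} = 0 for n > m+1. In particular, the coefficient of x^m/m! vanishes whenever n > m + 1. -/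
/-
Counting the surjections `Fin m → Fin k` twice, by inclusion–exclusion and as a partition into
`k` blocks together with a labelling of the blocks, gives `m! [x^m] (e^x - 1)^k = k! S(m, k)`.
Differentiating `(e^x - 1)^(j+1)` turns this into `m! [x^m] (e^x - 1)^j e^x = j! S(m+1, j+1)`.
Up to degree `m` the series `E` agrees with the polynomial `∑_{k ≤ m} (-1)^k (e^x - 1)^k / k!`,
so with `p = n - 1` the coefficient of `x^m / m!` is `∑_k (-1)^k C(p+k, p) S(m+1, p+k+1)`: this
is `a_{m,n}` reindexed by `k + n`, the terms with index below `n` or above `m + 1` being zero.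
-/

open Finset Function PowerSeries

theorem card_surjective_eq_sum {α β : Type*} [Fintype α] [Fintype β] [DecidableEq β] :
    (Nat.card {f : α → β // Surjective f} : ℤ) =
      ∑ i ∈ range (Fintype.card β + 1),
        (-1) ^ i * (Fintype.card β).choose i *
          ((Fintype.card β - i : ℕ) : ℤ) ^ Fintype.card α := by
  classical
  set missing : β → Finset (α → β) := fun b => {f | ∀ a, f a ≠ b}
  have h_surj : Nat.card {f : α → β // Surjective f} = #(univ.inf fun b => (missing b)ᶜ) := by
    rw [Nat.card_eq_fintype_card, Fintype.card_subtype]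
    congr 1
    ext f
    rw [mem_filter_univ]
    simp [missing, Surjective, Finset.mem_inf]
  have h_avoid (t : Finset β) : #(t.inf missing) = (Fintype.card β - #t) ^ Fintype.card α := by
    have : t.inf missing = Fintype.piFinset fun _ => tᶜ := by
      ext f
      simp only [Finset.mem_inf, missing, mem_filter, mem_univ, true_and, Fintype.mem_piFinset,
        mem_compl]
      exact ⟨fun h a ha => h (f a) ha a rfl, fun h b hb a hfa => h a (hfa ▸ hb)⟩
    rw [this, Fintype.card_piFinset, prod_const, card_univ, card_compl]
  rw [h_surj, inclusion_exclusion_card_inf_compl]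
  simp_rw [h_avoid]
  push_cast
  rw [sum_powerset_apply_card
    (fun i => (-1 : ℤ) ^ i * ((Fintype.card β - i : ℕ) : ℤ) ^ Fintype.card α), card_univ]
  refine sum_congr rfl fun i _ => ?_
  rw [nsmul_eq_mul]
  ring

section FiberPartition

variable {α β : Type*} [Fintype α] [DecidableEq β]

def fiber (f : α → β) (b : β) : Finset α := {a | f a = b}

@[simp] lemma mem_fiber {f : α → β} {a : α} {b : β} : a ∈ fiber f b ↔ f a = b := by
  simp [fiber]

lemma fiber_injective {f : α → β} (hf : Surjective f) : Injective (fiber f) := by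
  intro b b' h
  obtain ⟨a, rfl⟩ := hf b
  have : a ∈ fiber f b' := h ▸ mem_fiber.2 rfl
  exact mem_fiber.1 this

variable [DecidableEq α]

instance (f : α → β) : DecidableRel (Setoid.ker f).r :=
  fun a b => decidable_of_iff (f a = f b) Iff.rfl

def fiberPartition (f : α → β) : Finpartition (univ : Finset α) :=
  .ofSetoid (Setoid.ker f)

lemma fiberPartition_part (f : α → β) (a : α) : (fiberPartition f).part a = fiber f (f a) := by
  ext a'
  rw [fiberPartition, Finpartition.mem_part_ofSetoid_iff_rel, mem_fiber]
  exact eq_comm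

lemma fiberPartition_parts [Fintype β] {f : α → β} (hf : Surjective f) :
    (fiberPartition f).parts = univ.image (fiber f) := by
  ext B
  constructor
  · intro hB
    obtain ⟨a, -, rfl⟩ := (fiberPartition f).part_surjOn hB
    rw [fiberPartition_part]
    exact mem_image_of_mem _ (mem_univ _)
  · rintro hB
    obtain ⟨b, -, rfl⟩ := mem_image.1 hB
    obtain ⟨a, rfl⟩ := hf b
    rw [← fiberPartition_part]
    exact (fiberPartition f).part_mem.2 (mem_univ a)

lemma card_fiberPartition_parts [Fintype β] {f : α → β} (hf : Surjective f) :
    #(fiberPartition f).parts = Fintype.card β := by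
  rw [fiberPartition_parts hf, card_image_of_injective _ (fiber_injective hf), card_univ]

end FiberPartition

section Labelling

variable {α β : Type*} [Fintype α] [DecidableEq α] (P : Finpartition (univ : Finset α))

def labelling (e : P.parts ≃ β) (a : α) : β :=
  e ⟨P.part a, P.part_mem.2 (mem_univ a)⟩

lemma labelling_injective : Injective (labelling P : (P.parts ≃ β) → α → β) := by
  intro e e' h
  ext B
  obtain ⟨a, ha⟩ := P.nonempty_of_mem_parts B.2
  have hB : (⟨P.part a, P.part_mem.2 (mem_univ a)⟩ : P.parts) = B :=
    Subtype.ext (P.part_eq_of_mem B.2 ha)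
  rw [← hB]
  exact congrFun h a

variable [DecidableEq β]

lemma fiber_labelling (e : P.parts ≃ β) (B : P.parts) : fiber (labelling P e) (e B) = B := by
  ext a
  rw [mem_fiber, labelling, e.injective.eq_iff, Subtype.ext_iff, P.part_eq_iff_mem B.2]

lemma labelling_surjective (e : P.parts ≃ β) : Surjective (labelling P e) := by
  intro b
  obtain ⟨a, ha⟩ := P.nonempty_of_mem_parts (e.symm b).2
  rw [← fiber_labelling P e, e.apply_symm_apply] at ha
  exact ⟨a, mem_fiber.1 ha⟩

lemma fiberPartition_labelling [Fintype β] (e : P.parts ≃ β) :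
    fiberPartition (labelling P e) = P := by
  ext B
  rw [fiberPartition_parts (labelling_surjective P e), mem_image]
  refine ⟨?_, fun hB => ⟨e ⟨B, hB⟩, mem_univ _, fiber_labelling P e _⟩⟩
  rintro ⟨b, -, rfl⟩
  rw [← e.apply_symm_apply b, fiber_labelling]
  exact (e.symm b).2

lemma exists_labelling_eq [Fintype β] {f : α → β} (hf : Surjective f) :
    ∃ e, labelling (fiberPartition f) e = f := by
  have hmem (b : β) : fiber f b ∈ (fiberPartition f).parts := by
    rw [fiberPartition_parts hf]
    exact mem_image_of_mem _ (mem_univ b)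
  have hbij : Bijective fun b => (⟨fiber f b, hmem b⟩ : (fiberPartition f).parts) := by
    refine ⟨fun b b' h => fiber_injective hf (congrArg Subtype.val h), ?_⟩
    rintro ⟨B, hB⟩
    obtain ⟨b, -, rfl⟩ := mem_image.1 (fiberPartition_parts hf ▸ hB)
    exact ⟨b, rfl⟩
  refine ⟨(Equiv.ofBijective _ hbij).symm, funext fun a => ?_⟩
  rw [labelling, Equiv.symm_apply_eq, Equiv.ofBijective_apply]
  exact Subtype.ext (fiberPartition_part f a)

end Labelling

theorem card_surjective_eq_factorial_mul {α β : Type*} [Fintype α] [DecidableEq α] [Fintype β]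
    [DecidableEq β] :
    Nat.card {f : α → β // Surjective f} =
      (Fintype.card β).factorial *
        Nat.card {P : Finpartition (univ : Finset α) // #P.parts = Fintype.card β} := by
  let blocks (f : {f : α → β // Surjective f}) :
      {P : Finpartition (univ : Finset α) // #P.parts = Fintype.card β} :=
    ⟨fiberPartition f.1, card_fiberPartition_parts f.2⟩
  have hfiber (P : {P : Finpartition (univ : Finset α) // #P.parts = Fintype.card β}) :
      (P.1.parts ≃ β) ≃ {f // blocks f = P} := by
    refine Equiv.ofBijective (fun e => ⟨⟨labelling P.1 e, labelling_surjective P.1 e⟩,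
      Subtype.ext (fiberPartition_labelling P.1 e)⟩) ⟨fun e e' h => ?_, ?_⟩
    · exact labelling_injective P.1 (congrArg (fun f => f.1.1) h)
    · rintro ⟨⟨f, hf⟩, rfl⟩
      obtain ⟨e, he⟩ := exists_labelling_eq hf
      exact ⟨e, Subtype.ext (Subtype.ext he)⟩
  rw [Nat.card_congr (Equiv.sigmaFiberEquiv blocks).symm, Nat.card_sigma]
  simp_rw [← Nat.card_congr (hfiber _), Nat.card_eq_fintype_card]
  have hcard (P : {P : Finpartition (univ : Finset α) // #P.parts = Fintype.card β}) :
      Fintype.card (P.1.parts ≃ β) = (Fintype.card β).factorial := by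
    have hP : Fintype.card P.1.parts = Fintype.card β := by rw [Fintype.card_coe, P.2]
    rw [Fintype.card_equiv (Fintype.equivOfCardEq hP), hP]
  rw [sum_congr rfl fun P _ => hcard P, sum_const, card_univ, smul_eq_mul, mul_comm]

lemma stirling_eq_zero_of_lt {m k : ℕ} (h : m < k) : stirling m k = 0 := by
  refine Nat.card_eq_zero.2 (.inl ⟨fun P => ?_⟩)
  have := P.1.card_parts_le_card
  rw [P.2, card_univ, Fintype.card_fin] at this
  omega

section ExpSeries

variable {K : Type*} [Field K] [Algebra ℚ K]

lemma coeff_exp_pow (j m : ℕ) : coeff m (exp K ^ j) = (j : K) ^ m / m.factorial := by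
  rw [exp_pow_eq_rescale_exp, coeff_rescale, coeff_exp]
  simp [div_eq_mul_inv, mul_comm]

lemma coeff_exp_sub_one_pow (k m : ℕ) :
    coeff m ((exp K - 1) ^ k) = (k.factorial : K) * stirling m k / m.factorial := by
  have hcount : (k.factorial * stirling m k : K) =
      ∑ i ∈ range (k + 1), (-1) ^ i * k.choose i * ((k - i : ℕ) : K) ^ m := by
    have := card_surjective_eq_sum (α := Fin m) (β := Fin k)
    rw [card_surjective_eq_factorial_mul] at this
    simp only [Fintype.card_fin] at this
    rw [stirling]
    simpa using congrArg (Int.cast : ℤ → K) this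
  rw [hcount, sub_eq_neg_add, add_pow, map_sum, sum_div]
  refine sum_congr rfl fun i _ => ?_
  rw [← map_natCast (C (R := K)), ← map_one (C (R := K)), ← map_neg, ← map_pow, mul_comm,
    ← mul_assoc, ← map_mul, coeff_C_mul, coeff_exp_pow]
  ring

lemma coeff_exp_sub_one_pow_mul_exp (j m : ℕ) :
    coeff m ((exp K - 1) ^ j * exp K) =
      (j.factorial : K) * stirling (m + 1) (j + 1) / m.factorial := by
  have := algebraRat.charZero K
  have hderiv :
      d⁄dX K ((exp K - 1) ^ (j + 1)) = (j + 1 : K) • ((exp K - 1) ^ j * exp K) := by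
    rw [derivative_pow, map_sub, derivative_exp, derivative_one, sub_zero, Nat.add_sub_cancel,
      mul_assoc, ← map_natCast (C (R := K)), smul_eq_C_mul]
    push_cast
    ring
  have hcoeff := congrArg (coeff m) hderiv
  rw [coeff_derivative, coeff_smul, coeff_exp_sub_one_pow, smul_eq_mul] at hcoeff
  have hj : (j + 1 : K) ≠ 0 := Nat.cast_add_one_ne_zero j
  rw [← mul_right_inj' hj, ← hcoeff, Nat.factorial_succ, Nat.factorial_succ]
  push_cast
  field_simp

end ExpSeries

lemma coeff_mul_eq_of_trunc_eq {R : Type*} [CommSemiring R] {m : ℕ} (f : R⟦X⟧) {g g' : R⟦X⟧}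
    (h : trunc (m + 1) g = trunc (m + 1) g') : coeff m (f * g) = coeff m (f * g') := by
  rw [← coeff_coe_trunc_of_lt m.lt_succ_self, ← trunc_mul_trunc, h, trunc_mul_trunc,
    coeff_coe_trunc_of_lt m.lt_succ_self]

lemma coeff_sum_smul_pow_of_constantCoeff_eq_zero {R : Type*} [CommRing R] {g : R⟦X⟧}
    (hg : constantCoeff g = 0) (c : ℕ → R) {i N : ℕ} (hi : i < N) :
    coeff i (∑ k ∈ range N, c k • g ^ k) = ∑ k ∈ range (i + 1), c k * coeff i (g ^ k) := by
  have hX : X ∣ g := X_dvd_iff.2 hg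
  rw [map_sum, ← sum_range_add_sum_Ico _ (show i + 1 ≤ N by omega), sum_eq_zero (s := Ico _ _),
    add_zero]
  · simp only [coeff_smul, smul_eq_mul]
  · intro k hk
    rw [mem_Ico] at hk
    rw [coeff_smul, X_pow_dvd_iff.1 (pow_dvd_pow_of_dvd hX k) i (by omega), smul_zero]

lemma sum_Icc_neg_one_pow_choose_stirling {R : Type*} [CommRing R] (m p : ℕ) :
    ∑ j ∈ Icc 1 (m + 1), (-1 : R) ^ (j - (p + 1)) * ((j - 1).choose p : R) * stirling (m + 1) j =
      ∑ k ∈ range (m + 1),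
        (-1 : R) ^ k * ((p + k).choose p : R) * stirling (m + 1) (p + k + 1) := by
  set a : ℕ → R := fun j =>
    (-1 : R) ^ (j - (p + 1)) * ((j - 1).choose p : R) * stirling (m + 1) j
  calc ∑ j ∈ Icc 1 (m + 1), a j = ∑ j ∈ Icc 1 (p + 1 + m), a j := by
        refine sum_subset (Icc_subset_Icc_right (by omega)) fun j hj hj' => ?_
        simp only [mem_Icc] at hj hj'
        simp [a, stirling_eq_zero_of_lt (show m + 1 < j by omega)]
    _ = ∑ j ∈ Icc (p + 1) (p + 1 + m), a j := by
        refine (sum_subset (Icc_subset_Icc_left (by omega)) fun j hj hj' => ?_).symm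
        simp only [mem_Icc] at hj hj'
        simp [a, Nat.choose_eq_zero_of_lt (show j - 1 < p by omega)]
    _ = ∑ k ∈ range (m + 1), a (p + 1 + k) := by
        rw [← Ico_add_one_right_eq_Icc, sum_Ico_eq_sum_range,
          show p + 1 + m + 1 - (p + 1) = m + 1 by omega]
    _ = _ := by
        refine sum_congr rfl fun k _ => ?_
        simp only [a, Nat.add_right_comm p 1 k, Nat.add_sub_add_right, Nat.add_sub_cancel_left,
          Nat.add_sub_cancel]

/-- **Generating function identity for the coefficients `a_{m,n}`.**
For `n ≥ 1`, `((e^x−1)^{n−1}/(n−1)!) · e^x · e^{−(e^x−1)} = ∑_m a_{m,n} x^m/m!` over `ℚ`,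
where `E = e^{−(e^x−1)} = ∑_{k≥0} (−1)^k (e^x−1)^k/k!` is given coefficientwise, and
`a_{m,n} = ∑_{k=1}^{m+1} (−1)^{k−n} C(k−1,n−1) S(m+1,k)` (which vanishes for `n > m+1`);
in particular the coefficient of `x^m/m!` vanishes whenever `n > m + 1`. -/
theorem egf_a_coeff_eq (n : ℕ) (hn : 1 ≤ n) (E : PowerSeries ℚ)
    (hE : ∀ m : ℕ, PowerSeries.coeff m E =
      ∑ k ∈ Finset.range (m + 1),
        (-1 : ℚ) ^ k * (k.factorial : ℚ)⁻¹ *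
          PowerSeries.coeff m ((PowerSeries.exp ℚ - 1) ^ k)) :
    (∀ m : ℕ,
      PowerSeries.coeff m
          (((n - 1).factorial : ℚ)⁻¹ •
            ((PowerSeries.exp ℚ - 1) ^ (n - 1) * PowerSeries.exp ℚ * E)) =
        (∑ k ∈ Finset.Icc 1 (m + 1),
            (-1 : ℚ) ^ (k - n) * ((k - 1).choose (n - 1) : ℚ) * (stirling (m + 1) k : ℚ)) /
          (m.factorial : ℚ)) ∧
    ∀ m : ℕ, m + 1 < n →
      (∑ k ∈ Finset.Icc 1 (m + 1),
          (-1 : ℚ) ^ (k - n) * ((k - 1).choose (n - 1) : ℚ) * (stirling (m + 1) k : ℚ)) = 0 := by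
  obtain ⟨p, rfl⟩ : ∃ p, n = p + 1 := ⟨n - 1, by omega⟩
  rw [Nat.add_sub_cancel]
  refine ⟨fun m => ?_, fun m hm => sum_eq_zero fun j hj => ?_⟩
  · set c : ℕ → ℚ := fun k => (-1) ^ k * (k.factorial : ℚ)⁻¹
    have htrunc :
        trunc (m + 1) E = trunc (m + 1) (∑ k ∈ range (m + 1), c k • (exp ℚ - 1) ^ k) := by
      ext i
      rw [coeff_trunc, coeff_trunc]
      split_ifs with hi
      · rw [hE, coeff_sum_smul_pow_of_constantCoeff_eq_zero (by simp) c hi]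
      · rfl
    rw [coeff_smul, coeff_mul_eq_of_trunc_eq _ htrunc, mul_sum, map_sum,
      sum_Icc_neg_one_pow_choose_stirling, sum_div, smul_sum]
    refine sum_congr rfl fun k _ => ?_
    rw [mul_smul_comm, coeff_smul, mul_right_comm, ← pow_add, coeff_exp_sub_one_pow_mul_exp,
      Nat.cast_add_choose]
    simp only [c, smul_eq_mul]
    field_simp
  · rw [mem_Icc] at hj
    rw [Nat.choose_eq_zero_of_lt (by omega), Nat.cast_zero, mul_zero, zero_mul]
end
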